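/- Let m ≥ 2 be an integer and let L be a lattice generated by m elements that embeds into Co(P) for some poset P of length at most 2. Then L embeds into a direct product of lattices of the form Co(P_{I,J}), where each factor satisfies |I| + |J| ≤ 2^m − 1. -/

import Mathlib

/-! Common definitions: lattices of order-convex subsets of a poset,
length of a poset, the identities (S), (U), (B), (L2), (H_n), (H_{m,n}),
join-irreducibility, the join-dependency relation, join-seeds,
the posets P_{I,J}, tree-like posets, D-closed sets,
and complete lattice congruences. -/

open Set

/-- The lattice `Co P` of all order-convex subsets of a poset `P`. -/
def Co (P : Type*) [PartialOrder P] : Type _ := {s : Set P // s.OrdConnected}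

namespace Co

variable {P : Type*} [PartialOrder P]

instance : PartialOrder (Co P) := Subtype.partialOrder _

instance : InfSet (Co P) :=
  ⟨fun S => ⟨⋂ s ∈ S, s.1, Set.ordConnected_biInter fun s _ => s.2⟩⟩

noncomputable instance : CompleteLattice (Co P) :=
  completeLatticeOfInf (Co P) (by
    intro S
    constructor
    · intro t ht
      exact Set.biInter_subset_of_mem (t := fun s => s.1) ht
    · intro b hb
      exact Set.subset_iInter₂ fun t ht => hb ht)

/-- The order-convex subset of `P` with underlying set `X`. -/
def mk' (X : Set P) (hX : X.OrdConnected) : Co P := ⟨X, hX⟩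

/-- The singleton `{p}`, as an order-convex set. -/
def sngl (p : P) : Co P := ⟨{p}, Set.ordConnected_singleton⟩

/-- The empty order-convex set. -/
def emp : Co P := ⟨∅, Set.ordConnected_empty⟩

end Co

/-- `lengthLE P n` states that the poset `P` has length at most `n`, that is,
every finite chain of `P` has at most `n + 1` elements. -/
def lengthLE (P : Type*) [PartialOrder P] (n : ℕ) : Prop :=
  ∀ C : Finset P, IsChain (· ≤ ·) (C : Set P) → C.card ≤ n + 1

section Identities

/-- The Stirlitz identity (S). -/
def IdS (L : Type*) [Lattice L] : Prop :=
  ∀ a b b₀ b₁ c : L,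
    a ⊓ ((b ⊓ (b₀ ⊔ b₁)) ⊔ c) =
      (a ⊓ (b ⊓ (b₀ ⊔ b₁)))
      ⊔ (a ⊓ (b₀ ⊔ c) ⊓ ((b ⊓ (b₀ ⊔ b₁) ⊓ (a ⊔ b₀)) ⊔ c))
      ⊔ (a ⊓ (b₁ ⊔ c) ⊓ ((b ⊓ (b₀ ⊔ b₁) ⊓ (a ⊔ b₁)) ⊔ c))

/-- The Udav identity (U). -/
def IdU (L : Type*) [Lattice L] : Prop :=
  ∀ x x₀ x₁ x₂ : L,
    x ⊓ (x₀ ⊔ x₁) ⊓ (x₁ ⊔ x₂) ⊓ (x₀ ⊔ x₂) =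
      (x ⊓ x₀ ⊓ (x₁ ⊔ x₂)) ⊔ (x ⊓ x₁ ⊓ (x₀ ⊔ x₂)) ⊔ (x ⊓ x₂ ⊓ (x₀ ⊔ x₁))

/-- The Bond identity (B). -/
def IdB (L : Type*) [Lattice L] : Prop :=
  ∀ x a₀ a₁ b₀ b₁ : L,
    x ⊓ (a₀ ⊔ a₁) ⊓ (b₀ ⊔ b₁) =
      (x ⊓ a₀ ⊓ (b₀ ⊔ b₁)) ⊔ (x ⊓ a₁ ⊓ (b₀ ⊔ b₁))
      ⊔ (x ⊓ b₀ ⊓ (a₀ ⊔ a₁)) ⊔ (x ⊓ b₁ ⊓ (a₀ ⊔ a₁))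
      ⊔ (x ⊓ (a₀ ⊔ a₁) ⊓ (b₀ ⊔ b₁) ⊓ (a₀ ⊔ b₀) ⊓ (a₁ ⊔ b₁))
      ⊔ (x ⊓ (a₀ ⊔ a₁) ⊓ (b₀ ⊔ b₁) ⊓ (a₀ ⊔ b₁) ⊓ (a₁ ⊔ b₀))

/-- The identity (L₂). -/
def IdL2 (L : Type*) [Lattice L] : Prop :=
  ∀ a b b' c c' : L,
    a ⊓ ((b ⊓ (c ⊔ c')) ⊔ b') =
      (a ⊓ b ⊓ (c ⊔ c')) ⊔ (a ⊓ ((b ⊓ c) ⊔ b')) ⊔ (a ⊓ ((b ⊓ c') ⊔ b'))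

variable {L : Type*} [Lattice L]

/-- The lattice polynomial `U_{i,n}` (in the variables `x₀, …, xₙ, x'₁, …, x'ₙ`). -/
def Upoly (x x' : ℕ → L) (n : ℕ) (i : ℕ) : L :=
  if h : n ≤ i then x n
  else x i ⊓ (Upoly x x' n (i + 1) ⊔ x' (i + 1))
  termination_by n - i
  decreasing_by omega

/-- The lattice polynomial `V_{i,j,n}`. -/
def Vpoly (x x' : ℕ → L) (n i : ℕ) (j : ℕ) : L :=
  if h : i ≤ j then (x i ⊓ Upoly x x' n (i + 1)) ⊔ (x i ⊓ x' (i + 1))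
  else x j ⊓ (Vpoly x x' n i (j + 1) ⊔ x' (j + 1))
  termination_by i - j
  decreasing_by omega

/-- The lattice polynomial `W_{i,j,n}`. -/
def Wpoly (x x' : ℕ → L) (n i : ℕ) (j : ℕ) : L :=
  if h : i ≤ j then
    x i ⊓ (x' (i + 1) ⊔ x' (i + 2)) ⊓ ((Upoly x x' n (i + 1) ⊓ (x i ⊔ x' (i + 2))) ⊔ x' (i + 1))
  else x j ⊓ (Wpoly x x' n i (j + 1) ⊔ x' (j + 1))
  termination_by i - j
  decreasing_by omega

/-- `bigJoin f k = f 0 ⊔ f 1 ⊔ ⋯ ⊔ f k`. -/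
def bigJoin (f : ℕ → L) : ℕ → L
  | 0 => f 0
  | k + 1 => bigJoin f k ⊔ f (k + 1)

end Identities

/-- The identity (Hₙ) : `Uₙ = ⋁_{0 ≤ i ≤ n-1} V_{i,n} ∨ ⋁_{0 ≤ i ≤ n-2} W_{i,n}`
(intended for `n ≥ 1`). -/
def IdH (n : ℕ) (L : Type*) [Lattice L] : Prop :=
  ∀ x x' : ℕ → L,
    Upoly x x' n 0 =
      bigJoin (fun i =>
        if i + 2 ≤ n then Vpoly x x' n i 0 ⊔ Wpoly x x' n i 0 else Vpoly x x' n i 0) (n - 1)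

/-- The identity (H_{m,n}) (intended for `m, n ≥ 1`); the common base point is
`x 0 = y 0 = t`. -/
def IdHmn (m n : ℕ) (L : Type*) [Lattice L] : Prop :=
  ∀ x x' y y' : ℕ → L, x 0 = y 0 →
    Upoly x x' m 0 ⊓ Upoly y y' n 0 =
      bigJoin (fun i =>
          if i + 2 ≤ m then
            (Vpoly x x' m i 0 ⊓ Upoly y y' n 0) ⊔ (Wpoly x x' m i 0 ⊓ Upoly y y' n 0)
          else Vpoly x x' m i 0 ⊓ Upoly y y' n 0) (m - 1)
      ⊔ bigJoin (fun j =>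
          if j + 2 ≤ n then
            (Upoly x x' m 0 ⊓ Vpoly y y' n j 0) ⊔ (Upoly x x' m 0 ⊓ Wpoly y y' n j 0)
          else Upoly x x' m 0 ⊓ Vpoly y y' n j 0) (n - 1)
      ⊔ (Upoly x x' m 0 ⊓ Upoly y y' n 0 ⊓ (x 1 ⊔ y' 1) ⊓ (x' 1 ⊔ y 1))

/-- `p` is join-irreducible: `p = x ⊔ y` implies `p = x` or `p = y`. -/
def JIrr {L : Type*} [Lattice L] (p : L) : Prop :=
  ∀ x y : L, p = x ⊔ y → p = x ∨ p = y

/-- The join-dependency relation `p D q`. -/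
def DRel {L : Type*} [Lattice L] (p q : L) : Prop :=
  p ≠ q ∧ ∃ x : L, p ≤ q ⊔ x ∧ ∀ y < q, ¬ p ≤ y ⊔ x

/-- A subset `S` of a lattice `L` is a join-seed. -/
def JoinSeed (L : Type*) [Lattice L] (S : Set L) : Prop :=
  (∀ p ∈ S, JIrr p) ∧
  (∀ a : L, ∃ T ⊆ S, IsLUB T a) ∧
  (∀ p ∈ S, ∀ a b : L, p ≤ a ⊔ b → ¬ p ≤ a → ¬ p ≤ b →
    ∃ x ∈ S, ∃ y ∈ S, x ≤ a ∧ y ≤ b ∧ p ≤ x ⊔ y ∧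
      (∀ x' < x, ¬ p ≤ x' ⊔ y) ∧ (∀ y' < y, ¬ p ≤ x ⊔ y'))

/-- The poset `P_{I,J} = I ∪ {p} ∪ J`, where every element of `I` is below `p`,
`p` is below every element of `J`, every element of `I` is below every element
of `J`, and there are no other strict comparabilities. -/
def PIJ (I J : Type*) : Type _ := I ⊕ (Unit ⊕ J)

namespace PIJ

variable {I J : Type*}

/-- The rank (height) of an element of `P_{I,J}`. -/
def rank (a : PIJ I J) : ℕ :=
  Sum.elim (fun _ => 0) (Sum.elim (fun _ => 1) fun _ => 2) a

instance : PartialOrder (PIJ I J) where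
  le a b := a = b ∨ rank a < rank b
  le_refl a := Or.inl rfl
  le_trans a b c hab hbc := by
    rcases hab with rfl | h
    · exact hbc
    · rcases hbc with rfl | h'
      · exact Or.inr h
      · exact Or.inr (h.trans h')
  le_antisymm a b hab hba := by
    rcases hab with rfl | h
    · rfl
    · rcases hba with rfl | h'
      · rfl
      · omega

end PIJ

/-- A poset is tree-like if it has no infinite bounded chain and between any two
points there is at most one repetition-free finite path with respect to the
covering relation. -/
def TreeLike (P : Type*) [PartialOrder P] : Prop :=
  (∀ C : Set P, IsChain (· ≤ ·) C → BddAbove C → BddBelow C → C.Finite) ∧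
  (∀ a b : P, ∀ l₁ l₂ : List P,
    l₁.Nodup → l₁.head? = some a → l₁.getLast? = some b →
      l₁.Chain' (fun u v => u ⋖ v ∨ v ⋖ u) →
    l₂.Nodup → l₂.head? = some a → l₂.getLast? = some b →
      l₂.Chain' (fun u v => u ⋖ v ∨ v ⋖ u) →
    l₁ = l₂)

/-- A subset `U` of a poset `P` is `D`-closed. -/
def DClosed {P : Type*} [PartialOrder P] (U : Set P) : Prop :=
  ∀ x p y : P, x < p → p < y → (x ∈ U ∨ y ∈ U) → p ∈ U

/-- A complete congruence of a complete lattice. -/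
structure IsCompleteCongr {L : Type*} [CompleteLattice L] (θ : L → L → Prop) : Prop where
  refl : ∀ x, θ x x
  symm : ∀ {x y}, θ x y → θ y x
  trans : ∀ {x y z}, θ x y → θ y z → θ x z
  sup : ∀ {a b c d}, θ a b → θ c d → θ (a ⊔ c) (b ⊔ d)
  inf : ∀ {a b c d}, θ a b → θ c d → θ (a ⊓ c) (b ⊓ d)
  cSup : ∀ (x : L) (Y : Set L), Y.Nonempty → (∀ y ∈ Y, θ x y) → θ x (sSup Y)
  cInf : ∀ (x : L) (Y : Set L), Y.Nonempty → (∀ y ∈ Y, θ x y) → θ x (sInf Y)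

/-- The map `h_U : Co(P) → Co(P ∖ U)`, `X ↦ X ∖ U`. -/
def coRestrict {P : Type*} [PartialOrder P] (U : Set P) (X : Co P) :
    Co {p : P // p ∉ U} :=
  ⟨Subtype.val ⁻¹' X.1, by
    constructor
    rintro a ha b hb z hz
    exact X.2.out ha hb ⟨hz.1, hz.2⟩⟩

/-- The lattice `D(P)` of all `D`-closed subsets of a poset `P`. -/
def DSub (P : Type*) [PartialOrder P] : Type _ := {U : Set P // DClosed U}

namespace DSub

variable {P : Type*} [PartialOrder P]

instance : PartialOrder (DSub P) := Subtype.partialOrder _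

instance : InfSet (DSub P) :=
  ⟨fun S => ⟨⋂ U ∈ S, U.1, by
    intro x p y h1 h2 h3
    simp only [Set.mem_iInter] at h3 ⊢
    intro U hU
    exact U.2 x p y h1 h2 (h3.imp (fun h => h U hU) fun h => h U hU)⟩⟩

noncomputable instance : CompleteLattice (DSub P) :=
  completeLatticeOfInf (DSub P) (by
    intro S
    constructor
    · intro t ht
      exact Set.biInter_subset_of_mem (t := fun U => U.1) ht
    · intro b hb
      exact Set.subset_iInter₂ fun t ht => hb ht)

end DSub


/-!
It suffices to find, for every `p : P`, a lattice homomorphism `e_p : L → Co (P_{I,J})` such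
that `p ∈ f a ↔ apex ∈ e_p a`. If membership of `p` turns joins into disjunctions, a two-valued
`e_p` will do. Otherwise `p` lies strictly between a point of some `f a` and a point of some
`f b`, so, as `P` has length at most `2`, the points below `p` are minimal and those above `p`
are maximal. Membership of such a point in `f a` is then a lattice homomorphism `L → Prop`, hence
determined by its pattern, the set of generators whose images contain it. Identifying points
below (above) `p` with the same pattern yields `P_{I,J}`, where `I` and `J` are disjoint families
of nonempty subsets of `Fin m`, so `|I| + |J| ≤ 2^m - 1`.
-/

namespace LatticeHom

variable {α β : Type*} [Lattice α] [Lattice β]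

def ofMonotone (F : α → β) (hmono : Monotone F) (hsup : ∀ a b, F (a ⊔ b) ≤ F a ⊔ F b)
    (hinf : ∀ a b, F a ⊓ F b ≤ F (a ⊓ b)) : LatticeHom α β where
  toFun := F
  map_sup' a b := le_antisymm (hsup a b) (sup_le (hmono le_sup_left) (hmono le_sup_right))
  map_inf' a b := le_antisymm (le_inf (hmono inf_le_left) (hmono inf_le_right)) (hinf a b)

def pi {ι : Type*} {π : ι → Type*} [∀ i, Lattice (π i)] (e : ∀ i, LatticeHom α (π i)) :
    LatticeHom α (∀ i, π i) where
  toFun a i := e i a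
  map_sup' a b := funext fun i => map_sup (e i) a b
  map_inf' a b := funext fun i => map_inf (e i) a b

theorem eq_of_eqOn_of_latticeClosure_eq_univ {s : Set α} (hs : latticeClosure s = univ)
    {φ ψ : LatticeHom α β} (h : EqOn φ ψ s) : φ = ψ := by
  have hsub : latticeClosure s ⊆ {a | φ a = ψ a} :=
    latticeClosure_min h ⟨fun a ha b hb => by simp_all [map_sup],
      fun a ha b hb => by simp_all [map_inf]⟩
  exact LatticeHom.ext fun a => hsub (hs ▸ mem_univ a)

theorem exists_mem_apply_of_latticeClosure_eq_univ {s : Set α} (hs : latticeClosure s = univ)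
    (φ : LatticeHom α Prop) {a : α} (ha : φ a) : ∃ b ∈ s, φ b := by
  by_contra! h
  have hsub : latticeClosure s ⊆ {a | ¬ φ a} :=
    latticeClosure_min h ⟨fun a ha b hb => by simp_all [map_sup],
      fun a ha b hb => by simp_all [map_inf]⟩
  exact hsub (hs ▸ mem_univ a) ha

end LatticeHom

namespace Co

variable {P : Type*} [PartialOrder P]

theorem coe_inf (X Y : Co P) : (X ⊓ Y).1 = X.1 ∩ Y.1 :=
  Set.Subset.antisymm (Set.subset_inter (inf_le_left (b := Y)) (inf_le_right (a := X)))
    (show Co.mk' _ (X.2.inter Y.2) ≤ X ⊓ Y from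
      le_inf Set.inter_subset_left Set.inter_subset_right)

theorem mem_sup_iff {X Y : Co P} {z : P} :
    z ∈ (X ⊔ Y).1 ↔ ∃ u ∈ X.1 ∪ Y.1, ∃ v ∈ X.1 ∪ Y.1, u ≤ z ∧ z ≤ v := by
  let H : Co P := Co.mk' {z | ∃ u ∈ X.1 ∪ Y.1, ∃ v ∈ X.1 ∪ Y.1, u ≤ z ∧ z ≤ v}
    ⟨by
      rintro _ ⟨u, hu, -, -, huz, -⟩ _ ⟨-, -, v, hv, -, hwv⟩ _ ht
      exact ⟨u, hu, v, hv, huz.trans ht.1, ht.2.trans hwv⟩⟩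
  refine ⟨fun hz => (sup_le (a := X) (b := Y) (c := H) ?_ ?_) hz, ?_⟩
  · exact fun x hx => ⟨x, Or.inl hx, x, Or.inl hx, le_rfl, le_rfl⟩
  · exact fun y hy => ⟨y, Or.inr hy, y, Or.inr hy, le_rfl, le_rfl⟩
  · have hsub : X.1 ∪ Y.1 ⊆ (X ⊔ Y).1 :=
      Set.union_subset (le_sup_left (b := Y)) (le_sup_right (a := X))
    rintro ⟨u, hu, v, hv, huz, hzv⟩
    exact (X ⊔ Y).2.out (hsub hu) (hsub hv) ⟨huz, hzv⟩

theorem exists_lt_lt_of_mem_sup {X Y : Co P} {z : P} (hz : z ∈ (X ⊔ Y).1)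
    (hzX : z ∉ X.1) (hzY : z ∉ Y.1) :
    ∃ x y, x < z ∧ z < y ∧ (x ∈ X.1 ∧ y ∈ Y.1 ∨ x ∈ Y.1 ∧ y ∈ X.1) := by
  obtain ⟨u, hu, v, hv, huz, hzv⟩ := mem_sup_iff.1 hz
  have hneu : u ≠ z := by rintro rfl; rcases hu with h | h <;> contradiction
  have hnev : z ≠ v := by rintro rfl; rcases hv with h | h <;> contradiction
  refine ⟨u, v, huz.lt_of_ne hneu, hzv.lt_of_ne hnev, ?_⟩
  rcases hu with hu | hu <;> rcases hv with hv | hv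
  · exact (hzX (X.2.out hu hv ⟨huz, hzv⟩)).elim
  · exact Or.inl ⟨hu, hv⟩
  · exact Or.inr ⟨hu, hv⟩
  · exact (hzY (Y.2.out hu hv ⟨huz, hzv⟩)).elim

def IsSupPrimePoint (z : P) : Prop :=
  ∀ X Y : Co P, z ∈ (X ⊔ Y).1 → z ∈ X.1 ∨ z ∈ Y.1

theorem isSupPrimePoint_of_isMin {z : P} (hz : IsMin z) : IsSupPrimePoint z := by
  intro X Y h
  obtain ⟨u, hu, -, -, huz, -⟩ := mem_sup_iff.1 h
  rwa [hz.eq_of_le huz] at hu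

theorem isSupPrimePoint_of_isMax {z : P} (hz : IsMax z) : IsSupPrimePoint z := by
  intro X Y h
  obtain ⟨-, -, v, hv, -, hzv⟩ := mem_sup_iff.1 h
  rwa [hz.eq_of_ge hzv] at hv

def memHom {z : P} (hz : IsSupPrimePoint z) : LatticeHom (Co P) Prop where
  toFun X := z ∈ X.1
  map_sup' X Y :=
    propext ⟨hz X Y, fun h => h.elim (le_sup_left (b := Y) ·) (le_sup_right (a := X) ·)⟩
  map_inf' X Y := by simp only [coe_inf]; rfl

noncomputable def ofProp (Q : Type*) [PartialOrder Q] : LatticeHom Prop (Co Q) :=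
  LatticeHom.ofMonotone (fun q => mk' {_w | q} ⟨fun _ hq _ _ _ _ => hq⟩)
    (fun _ _ hqr _ hq => hqr hq)
    (fun _ _ _ hqr => hqr.elim (le_sup_left (b := mk' _ _) ·) (le_sup_right (a := mk' _ _) ·))
    (fun _ _ _ hqr => by rwa [coe_inf] at hqr)

end Co

theorem lengthLE.not_lt_lt_lt {P : Type*} [PartialOrder P] (hP : lengthLE P 2) {a b c d : P}
    (hab : a < b) (hbc : b < c) (hcd : c < d) : False := by
  have hmono : StrictMono ![a, b, c, d] := Fin.strictMono_iff_lt_succ.2 <| by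
    intro i; fin_cases i <;> assumption
  have := hP (Finset.univ.map ⟨_, hmono.injective⟩) <| by
    simpa using hmono.monotone.isChain_range
  simp at this

theorem Set.ncard_setOf_nonempty (α : Type*) [Fintype α] :
    {s : Set α | s.Nonempty}.ncard = 2 ^ Fintype.card α - 1 := by
  have : {s : Set α | s.Nonempty} = {∅}ᶜ := by ext s; simp [Set.nonempty_iff_ne_empty]
  rw [this, Set.ncard_compl, Set.ncard_singleton, ← Nat.card_eq_fintype_card]
  simp

namespace PIJ

variable {I J : Type*}

def apex : PIJ I J := .inr (.inl ())

theorem le_iff {a b : PIJ I J} : a ≤ b ↔ a = b ∨ rank a < rank b := Iff.rfl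

theorem lt_iff_rank_lt {a b : PIJ I J} : a < b ↔ rank a < rank b := by
  rw [lt_iff_le_not_ge, le_iff, le_iff]
  constructor
  · rintro ⟨rfl | h, h'⟩
    · exact (h' (Or.inl rfl)).elim
    · exact h
  · intro h
    exact ⟨Or.inr h, by rintro (rfl | h'); exacts [lt_irrefl _ h, lt_asymm h h']⟩

theorem inl_lt_apex (i : I) : @LT.lt (PIJ I J) _ (Sum.inl i) apex :=
  lt_iff_rank_lt.2 Nat.zero_lt_one

theorem apex_lt_inr (j : J) : (apex : PIJ I J) < Sum.inr (Sum.inr j) :=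
  lt_iff_rank_lt.2 Nat.one_lt_two

end PIJ

universe v

section Pattern

variable {m : ℕ} {L : Type v} [Lattice L] {P : Type*} [PartialOrder P]
  (f : LatticeHom L (Co P)) (g : Fin m → L)

def pattern (z : P) : Set (Fin m) := {i | z ∈ (f (g i)).1}

def MemWithPattern (Z : Set P) (S : Set (Fin m)) (a : L) : Prop :=
  ∃ z ∈ Z, pattern f g z = S ∧ z ∈ (f a).1

variable {f g}

theorem mem_iff_mem_of_pattern_eq (hg : latticeClosure (range g) = univ) {z z' : P}
    (hz : Co.IsSupPrimePoint z) (hz' : Co.IsSupPrimePoint z')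
    (h : pattern f g z = pattern f g z') (a : L) : z ∈ (f a).1 ↔ z' ∈ (f a).1 := by
  have := LatticeHom.eq_of_eqOn_of_latticeClosure_eq_univ hg
    (φ := (Co.memHom hz).comp f) (ψ := (Co.memHom hz').comp f)
    (by rintro _ ⟨i, rfl⟩; exact propext (Set.ext_iff.1 h i))
  exact Iff.of_eq (DFunLike.congr_fun this a)

theorem pattern_nonempty (hg : latticeClosure (range g) = univ) {z : P}
    (hz : Co.IsSupPrimePoint z) {a : L} (ha : z ∈ (f a).1) : (pattern f g z).Nonempty := by
  obtain ⟨_, ⟨i, rfl⟩, hi⟩ :=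
    LatticeHom.exists_mem_apply_of_latticeClosure_eq_univ hg ((Co.memHom hz).comp f) ha
  exact ⟨i, hi⟩

variable {Z : Set P} {S : Set (Fin m)} {a b : L}

theorem MemWithPattern.mono (hab : a ≤ b) (h : MemWithPattern f g Z S a) :
    MemWithPattern f g Z S b :=
  let ⟨z, hzZ, hzS, hza⟩ := h
  ⟨z, hzZ, hzS, OrderHomClass.mono f hab hza⟩

theorem MemWithPattern.sup (hZ : ∀ z ∈ Z, Co.IsSupPrimePoint z)
    (h : MemWithPattern f g Z S (a ⊔ b)) :
    MemWithPattern f g Z S a ∨ MemWithPattern f g Z S b := by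
  obtain ⟨z, hzZ, hzS, hz⟩ := h
  rw [map_sup] at hz
  exact (hZ z hzZ _ _ hz).imp (⟨z, hzZ, hzS, ·⟩) (⟨z, hzZ, hzS, ·⟩)

theorem MemWithPattern.inf (hg : latticeClosure (range g) = univ)
    (hZ : ∀ z ∈ Z, Co.IsSupPrimePoint z) (ha : MemWithPattern f g Z S a)
    (hb : MemWithPattern f g Z S b) : MemWithPattern f g Z S (a ⊓ b) := by
  obtain ⟨z, hzZ, hzS, hza⟩ := ha
  obtain ⟨z', hz'Z, hz'S, hz'b⟩ := hb
  have hzb : z ∈ (f b).1 :=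
    (mem_iff_mem_of_pattern_eq hg (hZ z hzZ) (hZ z' hz'Z) (hzS.trans hz'S.symm) b).2 hz'b
  refine ⟨z, hzZ, hzS, ?_⟩
  rw [map_inf, Co.coe_inf]
  exact ⟨hza, hzb⟩

end Pattern

section Star

variable {m : ℕ} {L : Type v} [Lattice L] {P : Type*} [PartialOrder P]
  (f : LatticeHom L (Co P)) (g : Fin m → L) (p : P)

def lowerPatterns : Set (Set (Fin m)) := {S | S.Nonempty ∧ ∃ x < p, pattern f g x = S}

/-- Patterns already realized below `p` are left out: a point above `p` sharing its pattern with
a point below `p` forces `p` into every `f a` that contains it. -/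
def upperPatterns : Set (Set (Fin m)) :=
  {T | T.Nonempty ∧ (∃ y > p, pattern f g y = T) ∧ T ∉ lowerPatterns f g p}

/-- The points comparable to `p`, with those below (above) `p` identified by pattern. -/
abbrev StarPIJ : Type v := PIJ (ULift.{v} (lowerPatterns f g p)) (ULift.{v} (upperPatterns f g p))

def starSet (a : L) : Set (StarPIJ f g p) :=
  Sum.elim (fun S => MemWithPattern f g (Iio p) S.down.1 a)
    (Sum.elim (fun _ => p ∈ (f a).1) (fun T => MemWithPattern f g (Ioi p) T.down.1 a))

theorem starSet_ordConnected (a : L) : (starSet f g p a).OrdConnected := by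
  refine ⟨fun u hu v hv w hw => ?_⟩
  rcases PIJ.le_iff.1 hw.1 with rfl | h₁
  · exact hu
  rcases PIJ.le_iff.1 hw.2 with rfl | h₂
  · exact hv
  rcases u with _ | _ | _ <;> rcases w with _ | _ | _ <;> rcases v with _ | _ | _ <;>
    simp only [PIJ.rank, Sum.elim_inl, Sum.elim_inr] at h₁ h₂ <;> try omega
  obtain ⟨x, hxp, -, hx⟩ := hu
  obtain ⟨y, hpy, -, hy⟩ := hv
  exact (f a).2.out hx hy ⟨le_of_lt hxp, le_of_lt hpy⟩

theorem starSet_mono : Monotone (starSet f g p) := by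
  rintro a b hab (S | _ | T) h
  exacts [h.mono hab, OrderHomClass.mono f hab h, h.mono hab]

def starCo (a : L) : Co (StarPIJ f g p) := Co.mk' (starSet f g p a) (starSet_ordConnected f g p a)

variable {f g p}

theorem starSet_inf (hg : latticeClosure (range g) = univ)
    (hmin : ∀ x < p, IsMin x) (hmax : ∀ y > p, IsMax y) (a b : L) :
    starSet f g p a ∩ starSet f g p b ⊆ starSet f g p (a ⊓ b) := by
  rintro (S | _ | T) ⟨ha, hb⟩
  · exact ha.inf hg (fun x hx => Co.isSupPrimePoint_of_isMin (hmin x hx)) hb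
  · change p ∈ (f (a ⊓ b)).1
    rw [map_inf, Co.coe_inf]
    exact ⟨ha, hb⟩
  · exact ha.inf hg (fun y hy => Co.isSupPrimePoint_of_isMax (hmax y hy)) hb

theorem apex_mem_starCo_sup (hg : latticeClosure (range g) = univ)
    (hmin : ∀ x < p, IsMin x) (hmax : ∀ y > p, IsMax y) {a b : L} {x y : P}
    (hxp : x < p) (hpy : p < y) (hx : x ∈ (f a).1) (hy : y ∈ (f b).1) :
    PIJ.apex ∈ (starCo f g p a ⊔ starCo f g p b).1 := by
  have hxsp := Co.isSupPrimePoint_of_isMin (hmin x hxp)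
  have hysp := Co.isSupPrimePoint_of_isMax (hmax y hpy)
  by_cases hlow : pattern f g y ∈ lowerPatterns f g p
  · obtain ⟨-, x', hx'p, hx'y⟩ := hlow
    have hx' : x' ∈ (f b).1 :=
      (mem_iff_mem_of_pattern_eq hg (Co.isSupPrimePoint_of_isMin (hmin x' hx'p)) hysp hx'y b).2 hy
    exact le_sup_right (a := starCo f g p a) ((f b).2.out hx' hy ⟨le_of_lt hx'p, le_of_lt hpy⟩)
  · have hS : pattern f g x ∈ lowerPatterns f g p :=
      ⟨pattern_nonempty hg hxsp hx, x, hxp, rfl⟩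
    have hT : pattern f g y ∈ upperPatterns f g p :=
      ⟨pattern_nonempty hg hysp hy, ⟨y, hpy, rfl⟩, hlow⟩
    refine (starCo f g p a ⊔ starCo f g p b).2.out (x := Sum.inl ⟨⟨_, hS⟩⟩)
      (y := Sum.inr (Sum.inr ⟨⟨_, hT⟩⟩)) ?_ ?_
      ⟨(PIJ.inl_lt_apex _).le, (PIJ.apex_lt_inr _).le⟩
    · exact le_sup_left (b := starCo f g p b) ⟨x, hxp, rfl, hx⟩
    · exact le_sup_right (a := starCo f g p a) ⟨y, hpy, rfl, hy⟩

theorem starSet_sup_subset (hg : latticeClosure (range g) = univ)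
    (hmin : ∀ x < p, IsMin x) (hmax : ∀ y > p, IsMax y) (a b : L) :
    starSet f g p (a ⊔ b) ⊆ (starCo f g p a ⊔ starCo f g p b).1 := by
  have hsub_a : starSet f g p a ⊆ (starCo f g p a ⊔ starCo f g p b).1 :=
    le_sup_left (a := starCo f g p a) (b := starCo f g p b)
  have hsub_b : starSet f g p b ⊆ (starCo f g p a ⊔ starCo f g p b).1 :=
    le_sup_right (a := starCo f g p a) (b := starCo f g p b)
  rintro (S | ⟨⟨⟩⟩ | T) hw
  · exact (hw.sup fun x hx => Co.isSupPrimePoint_of_isMin (hmin x hx)).elim (hsub_a ·) (hsub_b ·)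
  · change p ∈ (f (a ⊔ b)).1 at hw
    rw [map_sup] at hw
    by_cases ha : p ∈ (f a).1
    · exact hsub_a ha
    by_cases hb : p ∈ (f b).1
    · exact hsub_b hb
    obtain ⟨x, y, hxp, hpy, ⟨hx, hy⟩ | ⟨hx, hy⟩⟩ := Co.exists_lt_lt_of_mem_sup hw ha hb
    · exact apex_mem_starCo_sup hg hmin hmax hxp hpy hx hy
    · rw [sup_comm]
      exact apex_mem_starCo_sup hg hmin hmax hxp hpy hx hy
  · exact (hw.sup fun y hy => Co.isSupPrimePoint_of_isMax (hmax y hy)).elim (hsub_a ·) (hsub_b ·)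

noncomputable def starHom (hg : latticeClosure (range g) = univ)
    (hmin : ∀ x < p, IsMin x) (hmax : ∀ y > p, IsMax y) : LatticeHom L (Co (StarPIJ f g p)) :=
  LatticeHom.ofMonotone (starCo f g p) (starSet_mono f g p) (starSet_sup_subset hg hmin hmax)
    fun a b => (Co.coe_inf _ _).trans_le (starSet_inf hg hmin hmax a b)

end Star

section Components

variable {L : Type v} [Lattice L]

def FactorsThroughCoPIJ (n : ℕ) (φ : L → Prop) : Prop :=
  ∃ (I J : Type v), Nonempty I ∧ Nonempty J ∧ Finite I ∧ Finite J ∧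
    Nat.card I + Nat.card J ≤ n ∧
    ∃ e : LatticeHom L (Co (PIJ I J)), ∀ a, φ a ↔ PIJ.apex ∈ (e a).1

theorem factorsThroughCoPIJ_of_latticeHom {n : ℕ} (hn : 2 ≤ n) (φ : LatticeHom L Prop) :
    FactorsThroughCoPIJ n φ :=
  ⟨PUnit, PUnit, inferInstance, inferInstance, inferInstance, inferInstance,
    by simpa using hn, (Co.ofProp _).comp φ, fun _ => Iff.rfl⟩

variable {m : ℕ} {P : Type*} [PartialOrder P] {f : LatticeHom L (Co P)} {g : Fin m → L}

theorem ncard_lowerPatterns_add_ncard_upperPatterns_le (p : P) :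
    (lowerPatterns f g p).ncard + (upperPatterns f g p).ncard ≤ 2 ^ m - 1 := by
  rw [← Set.ncard_union_eq (Set.disjoint_left.2 fun _ hS hS' => hS'.2.2 hS)]
  calc _ ≤ {S : Set (Fin m) | S.Nonempty}.ncard :=
        Set.ncard_le_ncard (Set.union_subset (fun _ hS => hS.1) fun _ hT => hT.1)
    _ = 2 ^ m - 1 := by rw [Set.ncard_setOf_nonempty, Fintype.card_fin]

theorem factorsThroughCoPIJ_of_lt_lt (hg : latticeClosure (range g) = univ)
    (hP : lengthLE P 2) {p x₀ y₀ : P} {a₀ b₀ : L} (hx₀p : x₀ < p) (hpy₀ : p < y₀)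
    (hx₀ : x₀ ∈ (f a₀).1) (hy₀ : y₀ ∈ (f b₀).1) (hpb₀ : p ∉ (f b₀).1) :
    FactorsThroughCoPIJ (2 ^ m - 1) (fun a => p ∈ (f a).1) := by
  have hmin : ∀ x < p, IsMin x := fun x hxp =>
    isMin_iff_forall_not_lt.2 fun _ hux => hP.not_lt_lt_lt hux hxp hpy₀
  have hmax : ∀ y > p, IsMax y := fun y hpy =>
    isMax_iff_forall_not_lt.2 fun _ hyu => hP.not_lt_lt_lt hx₀p hpy hyu
  have hx₀sp := Co.isSupPrimePoint_of_isMin (hmin x₀ hx₀p)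
  have hy₀sp := Co.isSupPrimePoint_of_isMax (hmax y₀ hpy₀)
  have hS : pattern f g x₀ ∈ lowerPatterns f g p :=
    ⟨pattern_nonempty hg hx₀sp hx₀, x₀, hx₀p, rfl⟩
  have hT : pattern f g y₀ ∈ upperPatterns f g p := by
    refine ⟨pattern_nonempty hg hy₀sp hy₀, ⟨y₀, hpy₀, rfl⟩, ?_⟩
    rintro ⟨-, x, hxp, hxy₀⟩
    have hx : x ∈ (f b₀).1 := (mem_iff_mem_of_pattern_eq hg
      (Co.isSupPrimePoint_of_isMin (hmin x hxp)) hy₀sp hxy₀ b₀).2 hy₀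
    exact hpb₀ ((f b₀).2.out hx hy₀ ⟨le_of_lt hxp, le_of_lt hpy₀⟩)
  refine ⟨_, _, ⟨⟨_, hS⟩⟩, ⟨⟨_, hT⟩⟩, inferInstance, inferInstance, ?_,
    starHom hg hmin hmax, fun _ => Iff.rfl⟩
  simpa [Nat.card_coe_set_eq] using
    ncard_lowerPatterns_add_ncard_upperPatterns_le (f := f) (g := g) p

theorem factorsThroughCoPIJ_mem (hm : 2 ≤ m) (hg : latticeClosure (range g) = univ)
    (hP : lengthLE P 2) (p : P) : FactorsThroughCoPIJ (2 ^ m - 1) (fun a => p ∈ (f a).1) := by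
  by_cases hp : ∀ a b, p ∈ (f (a ⊔ b)).1 → p ∈ (f a).1 ∨ p ∈ (f b).1
  · have h4 : 4 ≤ 2 ^ m := Nat.pow_le_pow_right two_pos hm
    refine factorsThroughCoPIJ_of_latticeHom (by omega) <|
      LatticeHom.ofMonotone (fun a => p ∈ (f a).1)
        (fun _ _ hab hpa => OrderHomClass.mono f hab hpa) hp
        fun a b hab => ?_
    rw [map_inf, Co.coe_inf]
    exact hab
  push Not at hp
  obtain ⟨a, b, hab, ha, hb⟩ := hp
  rw [map_sup] at hab
  obtain ⟨x, y, hxp, hpy, ⟨hx, hy⟩ | ⟨hx, hy⟩⟩ := Co.exists_lt_lt_of_mem_sup hab ha hb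
  · exact factorsThroughCoPIJ_of_lt_lt hg hP hxp hpy hx hy hb
  · exact factorsThroughCoPIJ_of_lt_lt hg hP hxp hpy hx hy ha

end Components

theorem stmt3.{u} (m : ℕ) (hm : 2 ≤ m) (L : Type u) [Lattice L]
    (g : Fin m → L) (hg : latticeClosure (Set.range g) = Set.univ)
    (P : Type u) [PartialOrder P] (hP : lengthLE P 2)
    (f : LatticeHom L (Co P)) (hf : Function.Injective f) :
    ∃ (ι : Type u) (I J : ι → Type u)
      (_ : ∀ i, Nonempty (I i)) (_ : ∀ i, Nonempty (J i))
      (_ : ∀ i, Finite (I i)) (_ : ∀ i, Finite (J i)),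
      (∀ i, Nat.card (I i) + Nat.card (J i) ≤ 2 ^ m - 1) ∧
      ∃ e : LatticeHom L (∀ i, Co (PIJ (I i) (J i))), Function.Injective e := by
  choose I J hI hJ hIfin hJfin hcard e he using factorsThroughCoPIJ_mem (f := f) hm hg hP
  refine ⟨P, I, J, hI, hJ, hIfin, hJfin, hcard, LatticeHom.pi e, fun a b hab => hf ?_⟩
  refine Subtype.ext (Set.ext fun p => ?_)
  have hep : e p a = e p b := congrFun hab p
  simp only [he, hep]
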